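/- arXiv:1509.04529 — 8 statements merged into one kernel-verified Lean document; each statement's English description precedes it below -/
import Mathlib

section
/- Let (X, d) be a metric space, θ a lacunary sequence, 0 < β ≤ γ ≤ 1, and 0 < p < ∞. If a sequence (x_k) in X is strongly N_θ^β(p)-summable to x₀, i.e., lim_{r→∞} (1/h_r^β) Σ_{k ∈ I_r} d(x_k, x₀)^p = 0, then (x_k) is lacunary statistically convergent of order γ to x₀. -/
open Filter Finset

/-- For 0 < β ≤ γ ≤ 1 and 0 < p < ∞, strong N_θ^β(p)-summability to x₀
implies lacunary statistical convergence of order γ to x₀. -/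
theorem stmt_5 {X : Type*} [MetricSpace X]
    (k : ℕ → ℕ) (hk : StrictMono k) (hk0 : k 0 = 0)
    (hh : Tendsto (fun r => ((k (r + 1) - k r : ℕ) : ℝ)) atTop atTop)
    (β γ p : ℝ) (hβ0 : 0 < β) (hβγ : β ≤ γ) (hγ1 : γ ≤ 1) (hp : 0 < p)
    (x : ℕ → X) (x₀ : X)
    (hx : Tendsto (fun r =>
      (1 / ((k (r + 1) - k r : ℕ) : ℝ) ^ β) *
        ∑ i ∈ Finset.Ioc (k r) (k (r + 1)), dist (x i) x₀ ^ p)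
      atTop (nhds 0)) :
    ∀ ε > 0, Tendsto (fun r =>
      (1 / ((k (r + 1) - k r : ℕ) : ℝ) ^ γ) *
        (((Finset.Ioc (k r) (k (r + 1))).filter (fun i => ε ≤ dist (x i) x₀)).card : ℝ))
      atTop (nhds 0) := by
  intro ε hε
  have hεp : 0 < ε ^ p := Real.rpow_pos_of_pos hε p
  have hbound : Tendsto (fun r =>
      (ε ^ p)⁻¹ * ((1 / ((k (r + 1) - k r : ℕ) : ℝ) ^ β) *
        ∑ i ∈ Finset.Ioc (k r) (k (r + 1)), dist (x i) x₀ ^ p))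
      atTop (nhds 0) := by
    simpa using hx.const_mul (ε ^ p)⁻¹
  have h1 : ∀ᶠ r in atTop, (1 : ℝ) ≤ ((k (r + 1) - k r : ℕ) : ℝ) := hh.eventually_ge_atTop 1
  refine tendsto_of_tendsto_of_tendsto_of_le_of_le' tendsto_const_nhds hbound ?_ ?_
  · filter_upwards [h1] with r hr
    have hpos : (0 : ℝ) < ((k (r + 1) - k r : ℕ) : ℝ) ^ γ :=
      Real.rpow_pos_of_pos (lt_of_lt_of_le one_pos hr) γ
    positivity
  · filter_upwards [h1] with r hr
    set h : ℝ := ((k (r + 1) - k r : ℕ) : ℝ)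
    have hhpos : (0 : ℝ) < h := lt_of_lt_of_le one_pos hr
    have hβγ' : h ^ β ≤ h ^ γ := Real.rpow_le_rpow_of_exponent_le hr hβγ
    have hβpos : (0 : ℝ) < h ^ β := Real.rpow_pos_of_pos hhpos β
    have hγpos : (0 : ℝ) < h ^ γ := Real.rpow_pos_of_pos hhpos γ
    -- card bound: ε^p * card ≤ sum
    have hcard : ε ^ p * (((Finset.Ioc (k r) (k (r + 1))).filter
        (fun i => ε ≤ dist (x i) x₀)).card : ℝ) ≤
        ∑ i ∈ Finset.Ioc (k r) (k (r + 1)), dist (x i) x₀ ^ p := by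
      calc ε ^ p * (((Finset.Ioc (k r) (k (r + 1))).filter
            (fun i => ε ≤ dist (x i) x₀)).card : ℝ)
          = ∑ _i ∈ (Finset.Ioc (k r) (k (r + 1))).filter
              (fun i => ε ≤ dist (x i) x₀), ε ^ p := by
            rw [Finset.sum_const, nsmul_eq_mul, mul_comm]
        _ ≤ ∑ i ∈ (Finset.Ioc (k r) (k (r + 1))).filter
              (fun i => ε ≤ dist (x i) x₀), dist (x i) x₀ ^ p := by
            refine Finset.sum_le_sum fun i hi => ?_
            have := (Finset.mem_filter.mp hi).2
            exact Real.rpow_le_rpow hε.le this hp.le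
        _ ≤ ∑ i ∈ Finset.Ioc (k r) (k (r + 1)), dist (x i) x₀ ^ p := by
            refine Finset.sum_le_sum_of_subset_of_nonneg (Finset.filter_subset _ _)
              fun i _ _ => Real.rpow_nonneg dist_nonneg p
    have hcard' : (((Finset.Ioc (k r) (k (r + 1))).filter
        (fun i => ε ≤ dist (x i) x₀)).card : ℝ) ≤
        (ε ^ p)⁻¹ * ∑ i ∈ Finset.Ioc (k r) (k (r + 1)), dist (x i) x₀ ^ p := by
      rw [← le_div_iff₀' hεp] at hcard
      simpa [div_eq_inv_mul] using hcard
    calc (1 / h ^ γ) * (((Finset.Ioc (k r) (k (r + 1))).filter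
          (fun i => ε ≤ dist (x i) x₀)).card : ℝ)
        ≤ (1 / h ^ β) * (((Finset.Ioc (k r) (k (r + 1))).filter
          (fun i => ε ≤ dist (x i) x₀)).card : ℝ) := by
          apply mul_le_mul_of_nonneg_right _ (Nat.cast_nonneg _)
          exact one_div_le_one_div_of_le hβpos hβγ'
      _ ≤ (1 / h ^ β) * ((ε ^ p)⁻¹ * ∑ i ∈ Finset.Ioc (k r) (k (r + 1)),
            dist (x i) x₀ ^ p) := by
          exact mul_le_mul_of_nonneg_left hcard' (by positivity)
      _ = (ε ^ p)⁻¹ * ((1 / h ^ β) * ∑ i ∈ Finset.Ioc (k r) (k (r + 1)),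
            dist (x i) x₀ ^ p) := by ring
end

section
/- Let (X, d) be a metric space, θ = (k_r) a lacunary sequence with q_r = k_r/k_{r−1}, and 0 < β ≤ 1. If liminf_r q_r > 1 and a sequence (x_k) is statistically convergent of order β to x₀ (i.e., (1/n^β)·|{k ≤ n : d(x_k,x₀) ≥ ε}| → 0 for every ε > 0), then (x_k) is lacunary statistically convergent of order β to x₀. -/
open Filter Finset
/-- If liminf q_r > 1 (q_r = k_{r+1}/k_r) then statistical convergence of
order β to x₀ implies lacunary statistical convergence of order β to x₀. -/
theorem stmt_6 {X : Type*} [MetricSpace X]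
    (k : ℕ → ℕ) (hk : StrictMono k) (hk0 : k 0 = 0)
    (hh : Tendsto (fun r => ((k (r + 1) - k r : ℕ) : ℝ)) atTop atTop)
    (β : ℝ) (hβ0 : 0 < β) (hβ1 : β ≤ 1)
    (hq : 1 < Filter.liminf (fun r => ((k (r + 1) : ℕ) : ℝ) / ((k r : ℕ) : ℝ)) atTop)
    (x : ℕ → X) (x₀ : X)
    (hx : ∀ ε > 0, Tendsto (fun n : ℕ =>
      (1 / (n : ℝ) ^ β) *
        (((Finset.Icc 1 n).filter (fun i => ε ≤ dist (x i) x₀)).card : ℝ))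
      atTop (nhds 0)) :
    ∀ ε > 0, Tendsto (fun r =>
      (1 / ((k (r + 1) - k r : ℕ) : ℝ) ^ β) *
        (((Finset.Ioc (k r) (k (r + 1))).filter (fun i => ε ≤ dist (x i) x₀)).card : ℝ))
      atTop (nhds 0) := by
  intro ε hε
  obtain ⟨b, hb1, hbL⟩ := exists_between hq
  have hbd : IsBoundedUnder (· ≥ ·) atTop
      (fun r => ((k (r + 1) : ℕ) : ℝ) / ((k r : ℕ) : ℝ)) :=
    isBoundedUnder_of_eventually_ge (a := 0) (Eventually.of_forall fun r => by positivity)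
  have hev : ∀ᶠ r in atTop, b < ((k (r + 1) : ℕ) : ℝ) / ((k r : ℕ) : ℝ) :=
    eventually_lt_of_lt_liminf hbL hbd
  have hb0 : (0:ℝ) < b := by linarith
  set c : ℝ := (b - 1) / b with hcdef
  have hc0 : 0 < c := by apply div_pos <;> linarith
  set M : ℝ := 1 / c ^ β with hMdef
  have hcb : (0:ℝ) < c ^ β := Real.rpow_pos_of_pos hc0 β
  have hkt : Tendsto (fun r => k (r + 1)) atTop atTop :=
    hk.tendsto_atTop.comp (tendsto_add_atTop_nat 1)
  have ha : Tendsto (fun r => M * ((1 / ((k (r + 1) : ℕ) : ℝ) ^ β) *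
      (((Finset.Icc 1 (k (r + 1))).filter (fun i => ε ≤ dist (x i) x₀)).card : ℝ)))
      atTop (nhds 0) := by
    have := ((hx ε hε).comp hkt).const_mul M
    rw [mul_zero] at this
    exact this
  refine tendsto_of_tendsto_of_tendsto_of_le_of_le' tendsto_const_nhds ha ?_ ?_
  · filter_upwards with r
    positivity
  · filter_upwards [hev, eventually_ge_atTop 1] with r hr hr1
    have hkr0 : 0 < k r := hk0 ▸ hk (Nat.lt_of_lt_of_le Nat.zero_lt_one hr1)
    have hkr0' : (0:ℝ) < (k r : ℕ) := by exact_mod_cast hkr0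
    have hle : k r ≤ k (r + 1) := (hk (lt_add_one r)).le
    have hK0 : (0:ℝ) < ((k (r + 1) : ℕ) : ℝ) := lt_of_lt_of_le hkr0' (by exact_mod_cast hle)
    set K : ℝ := ((k (r + 1) : ℕ) : ℝ)
    have hmul : b * ((k r : ℕ) : ℝ) < K := (lt_div_iff₀ hkr0').mp hr
    have hH : ((k (r + 1) - k r : ℕ) : ℝ) = K - ((k r : ℕ) : ℝ) := by
      push_cast [Nat.cast_sub hle]; ring
    set H : ℝ := ((k (r + 1) - k r : ℕ) : ℝ)
    have hcK : c * K ≤ H := by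
      rw [hH, hcdef, div_mul_eq_mul_div, div_le_iff₀ hb0]
      nlinarith
    have hH0 : 0 < H := lt_of_lt_of_le (by positivity) hcK
    have hrpow : (c * K) ^ β ≤ H ^ β := Real.rpow_le_rpow (by positivity) hcK hβ0.le
    have hsplit : (c * K) ^ β = c ^ β * K ^ β := Real.mul_rpow hc0.le hK0.le
    have hinv : 1 / H ^ β ≤ 1 / (c ^ β * K ^ β) := by
      rw [← hsplit]
      exact one_div_le_one_div_of_le (Real.rpow_pos_of_pos (by positivity) β) hrpow
    have hcard : (((Finset.Ioc (k r) (k (r + 1))).filter (fun i => ε ≤ dist (x i) x₀)).card : ℝ)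
        ≤ (((Finset.Icc 1 (k (r + 1))).filter (fun i => ε ≤ dist (x i) x₀)).card : ℝ) := by
      have : (Finset.Ioc (k r) (k (r + 1))).filter (fun i => ε ≤ dist (x i) x₀)
          ⊆ (Finset.Icc 1 (k (r + 1))).filter (fun i => ε ≤ dist (x i) x₀) := by
        apply Finset.filter_subset_filter
        intro i hi
        simp only [Finset.mem_Ioc] at hi
        simp only [Finset.mem_Icc]
        exact ⟨Nat.one_le_iff_ne_zero.mpr (by omega), hi.2⟩
      exact_mod_cast Finset.card_le_card this
    calc (1 / H ^ β) *
        (((Finset.Ioc (k r) (k (r + 1))).filter (fun i => ε ≤ dist (x i) x₀)).card : ℝ)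
        ≤ (1 / (c ^ β * K ^ β)) *
        (((Finset.Icc 1 (k (r + 1))).filter (fun i => ε ≤ dist (x i) x₀)).card : ℝ) := by
          apply mul_le_mul hinv hcard (by positivity) (by positivity)
      _ = M * ((1 / K ^ β) *
        (((Finset.Icc 1 (k (r + 1))).filter (fun i => ε ≤ dist (x i) x₀)).card : ℝ)) := by
          rw [hMdef]; field_simp
end

section
/- Let (X, d) be a metric space, θ = (k_r) a lacunary sequence, and 0 < β ≤ 1. If liminf_{r→∞} h_r^β / k_r > 0, then every sequence (x_k) that is statistically convergent (of order 1) to x₀ is lacunary statistically convergent of order β to x₀. -/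
open Filter Finset

set_option maxHeartbeats 1000000 in
/-- If liminf_r h_r^β / k_{r+1} > 0, then statistical convergence (order 1)
to x₀ implies lacunary statistical convergence of order β to x₀. -/
theorem stmt_7 {X : Type*} [MetricSpace X]
    (k : ℕ → ℕ) (hk : StrictMono k) (hk0 : k 0 = 0)
    (hh : Tendsto (fun r => ((k (r + 1) - k r : ℕ) : ℝ)) atTop atTop)
    (β : ℝ) (hβ0 : 0 < β) (hβ1 : β ≤ 1)
    (hq : 0 < Filter.liminf
      (fun r => ((k (r + 1) - k r : ℕ) : ℝ) ^ β / ((k (r + 1) : ℕ) : ℝ)) atTop)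
    (x : ℕ → X) (x₀ : X)
    (hx : ∀ ε > 0, Tendsto (fun n : ℕ =>
      (1 / (n : ℝ)) *
        (((Finset.Icc 1 n).filter (fun i => ε ≤ dist (x i) x₀)).card : ℝ))
      atTop (nhds 0)) :
    ∀ ε > 0, Tendsto (fun r =>
      (1 / ((k (r + 1) - k r : ℕ) : ℝ) ^ β) *
        (((Finset.Ioc (k r) (k (r + 1))).filter (fun i => ε ≤ dist (x i) x₀)).card : ℝ))
      atTop (nhds 0) := by
  intro ε hε
  set L := Filter.liminf
      (fun r => ((k (r + 1) - k r : ℕ) : ℝ) ^ β / ((k (r + 1) : ℕ) : ℝ)) atTop with hLdef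
  -- upper comparison sequence
  have h1 : Tendsto (fun r : ℕ => k (r + 1)) atTop atTop :=
    hk.tendsto_atTop.comp (tendsto_add_atTop_nat 1)
  have hg : Tendsto (fun r : ℕ => (2 / L) *
      ((1 / ((k (r + 1) : ℕ) : ℝ)) *
        (((Finset.Icc 1 (k (r + 1))).filter (fun i => ε ≤ dist (x i) x₀)).card : ℝ)))
      atTop (nhds 0) := by
    have := ((hx ε hε).comp h1).const_mul (2 / L)
    simpa using this
  refine tendsto_of_tendsto_of_tendsto_of_le_of_le' tendsto_const_nhds hg ?_ ?_
  · refine Eventually.of_forall fun r => mul_nonneg ?_ (by positivity)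
    have : (0 : ℝ) ≤ ((k (r + 1) - k r : ℕ) : ℝ) ^ β := Real.rpow_nonneg (by positivity) β
    positivity
  · -- eventually: L/2 < h_r^β / k(r+1)
    have hbd : IsBoundedUnder (· ≥ ·) atTop
        (fun r => ((k (r + 1) - k r : ℕ) : ℝ) ^ β / ((k (r + 1) : ℕ) : ℝ)) := by
      refine isBoundedUnder_of ⟨0, fun r => ?_⟩
      have : (0 : ℝ) ≤ ((k (r + 1) - k r : ℕ) : ℝ) ^ β := Real.rpow_nonneg (by positivity) β
      positivity
    have hev : ∀ᶠ r in atTop,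
        L / 2 < ((k (r + 1) - k r : ℕ) : ℝ) ^ β / ((k (r + 1) : ℕ) : ℝ) :=
      eventually_lt_of_lt_liminf (by linarith) hbd
    have hev2 : ∀ᶠ r in atTop, (1 : ℝ) ≤ ((k (r + 1) - k r : ℕ) : ℝ) :=
      hh.eventually_ge_atTop 1
    filter_upwards [hev, hev2] with r hr hr2
    set h := ((k (r + 1) - k r : ℕ) : ℝ) with hhdef
    set K := ((k (r + 1) : ℕ) : ℝ) with hKdef
    have hKpos : (0 : ℝ) < K := by
      rw [hKdef]
      exact_mod_cast hk0 ▸ hk (Nat.succ_pos r)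
    have hhb : (0 : ℝ) < h ^ β := Real.rpow_pos_of_pos (by linarith) β
    have hLpos : 0 < L := hq
    -- filter card inequality
    have hsub : Finset.Ioc (k r) (k (r + 1)) ⊆ Finset.Icc 1 (k (r + 1)) := by
      intro i hi
      simp only [Finset.mem_Ioc] at hi
      simp only [Finset.mem_Icc]
      omega
    have hcard : (((Finset.Ioc (k r) (k (r + 1))).filter (fun i => ε ≤ dist (x i) x₀)).card : ℝ)
        ≤ (((Finset.Icc 1 (k (r + 1))).filter (fun i => ε ≤ dist (x i) x₀)).card : ℝ) := by
      exact_mod_cast Finset.card_le_card (Finset.filter_subset_filter _ hsub)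
    set a := (((Finset.Ioc (k r) (k (r + 1))).filter (fun i => ε ≤ dist (x i) x₀)).card : ℝ)
    set b := (((Finset.Icc 1 (k (r + 1))).filter (fun i => ε ≤ dist (x i) x₀)).card : ℝ)
    have hbnn : 0 ≤ b := Nat.cast_nonneg _
    -- from L/2 < h^β / K : K / h^β < 2 / L, so 1/h^β ≤ 2/(L*K)
    have key : 1 / h ^ β ≤ 2 / (L * K) := by
      have h2 : L * K < h ^ β * 2 := (div_lt_div_iff₀ two_pos hKpos).mp hr
      rw [div_le_div_iff₀ hhb (by positivity)]
      nlinarith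
    calc (1 / h ^ β) * a ≤ (2 / (L * K)) * b := by
          apply mul_le_mul key hcard (Nat.cast_nonneg _) (by positivity)
        _ = (2 / L) * ((1 / K) * b) := by
          field_simp
end

section
/- Let (X, d) be a metric space, θ = (k_r) a lacunary sequence, 0 < β ≤ 1 and 0 < p < ∞. If limsup_r k_r / k_{r−1}^β < ∞ and (x_k) is strongly N_θ(p)-summable (order 1) to x₀, i.e., τ_r := (1/h_r) Σ_{k ∈ I_r} d(x_k, x₀)^p → 0, then (x_k) is strongly p-Cesàro summable of order β to x₀: (1/t^β) Σ_{k=1}^t d(x_k, x₀)^p → 0 as t → ∞. -/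
open Filter Finset

/-!
Write `S n = ∑_{i ≤ n} d(x_i, x₀)^p`. The block sums are `o(h_r)`, so a weighted Stolz–Cesàro
argument gives `S (k_r) = o(k_r)`. For `k_r < t ≤ k_{r+1}` monotonicity gives
`S t / t^β ≤ S (k_{r+1}) / k_r^β = (k_{r+1} / k_r^β) · (S (k_{r+1}) / k_{r+1})`,
a bounded factor times a null one.
-/

open Asymptotics Topology

section Blocks

variable {k : ℕ → ℕ}

lemma sum_Icc_one_eq_sum_range_sum_Ioc {M : Type*} [AddCommMonoid M] (f : ℕ → M)
    (hk : Monotone k) (hk0 : k 0 = 0) (n : ℕ) :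
    ∑ i ∈ Icc 1 (k n), f i = ∑ r ∈ range n, ∑ i ∈ Ioc (k r) (k (r + 1)), f i := by
  induction n with
  | zero => simp [hk0]
  | succ n ih =>
    have hIcc : ∀ m, Icc 1 m = Ioc 0 m := Icc_add_one_left_eq_Ioc 0
    rw [sum_range_succ, ← ih, hIcc, hIcc]
    exact (sum_Ioc_consecutive f (Nat.zero_le _) (hk n.le_succ)).symm

lemma sum_range_cast_sub_succ (hk : Monotone k) (hk0 : k 0 = 0) (n : ℕ) :
    ∑ r ∈ range n, ((k (r + 1) - k r : ℕ) : ℝ) = k n := by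
  rw [← Nat.cast_sum, sum_range_tsub hk, hk0, Nat.sub_zero]

-- Weighted Stolz–Cesàro.
lemma isLittleO_sum_Icc_of_isLittleO_blocks {E : Type*} [NormedAddCommGroup E] {a : ℕ → E}
    (hk : StrictMono k) (hk0 : k 0 = 0)
    (h : (fun r ↦ ∑ i ∈ Ioc (k r) (k (r + 1)), a i) =o[atTop]
      fun r ↦ ((k (r + 1) - k r : ℕ) : ℝ)) :
    (fun r ↦ ∑ i ∈ Icc 1 (k r), a i) =o[atTop] fun r ↦ (k r : ℝ) := by
  have hk_atTop : Tendsto (fun n ↦ (k n : ℝ)) atTop atTop :=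
    tendsto_natCast_atTop_atTop.comp hk.tendsto_atTop
  have hsum := h.sum_range (fun r ↦ Nat.cast_nonneg _) <| by
    simpa only [sum_range_cast_sub_succ hk.monotone hk0] using hk_atTop
  simpa only [← sum_Icc_one_eq_sum_range_sum_Ioc _ hk.monotone hk0,
    sum_range_cast_sub_succ hk.monotone hk0] using hsum

def blockIndex (k : ℕ → ℕ) (t : ℕ) : ℕ := Nat.findGreatest (fun r ↦ k r < t) t

lemma mem_Ioc_blockIndex (hk : StrictMono k) {t : ℕ} (ht : k 0 < t) :
    t ∈ Ioc (k (blockIndex k t)) (k (blockIndex k t + 1)) := by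
  have hspec : k (blockIndex k t) < t :=
    Nat.findGreatest_spec (P := fun r ↦ k r < t) (Nat.zero_le t) ht
  refine mem_Ioc.mpr ⟨hspec, not_lt.mp fun hlt ↦ ?_⟩
  exact Nat.findGreatest_is_greatest (P := fun r ↦ k r < t) (Nat.lt_succ_self _)
    (hk.le_apply.trans_lt hlt).le hlt

lemma tendsto_blockIndex (hk : StrictMono k) : Tendsto (blockIndex k) atTop atTop := by
  refine tendsto_atTop_atTop.mpr fun R ↦ ⟨k R + 1, fun t ht ↦ ?_⟩
  exact Nat.le_findGreatest (hk.le_apply.trans (by omega)) (by omega)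

end Blocks

lemma sum_Icc_div_rpow_le {a : ℕ → ℝ} (ha : 0 ≤ a) {β : ℝ} (hβ : 0 ≤ β) {m t n : ℕ}
    (hm : 0 < m) (hmt : m ≤ t) (htn : t ≤ n) :
    (∑ i ∈ Icc 1 t, a i) / (t : ℝ) ^ β ≤ (∑ i ∈ Icc 1 n, a i) / (m : ℝ) ^ β := by
  gcongr ?_ / ?_
  · exact sum_nonneg fun i _ ↦ ha i
  · exact sum_le_sum_of_subset_of_nonneg (Icc_subset_Icc_right htn) fun i _ _ ↦ ha i
  · exact Real.rpow_le_rpow (Nat.cast_nonneg m) (Nat.cast_le.mpr hmt) hβ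

lemma tendsto_sum_Icc_div_rpow_of_blocks {a : ℕ → ℝ} (ha : 0 ≤ a) {k : ℕ → ℕ} (hk : StrictMono k)
    {β : ℝ} (hβ : 0 ≤ β)
    (h : Tendsto (fun r ↦ (∑ i ∈ Icc 1 (k (r + 1)), a i) / (k r : ℝ) ^ β) atTop (𝓝 0)) :
    Tendsto (fun t : ℕ ↦ (∑ i ∈ Icc 1 t, a i) / (t : ℝ) ^ β) atTop (𝓝 0) := by
  refine squeeze_zero' (Eventually.of_forall fun t ↦ ?_) ?_ (h.comp (tendsto_blockIndex hk))
  · exact div_nonneg (sum_nonneg fun i _ ↦ ha i) (by positivity)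
  filter_upwards [eventually_gt_atTop (k 0), (tendsto_blockIndex hk).eventually_ge_atTop 1]
    with t ht hr
  obtain ⟨hlow, hup⟩ := mem_Ioc.mp (mem_Ioc_blockIndex hk ht)
  exact sum_Icc_div_rpow_le ha hβ ((Nat.zero_le _).trans_lt (hk hr)) hlow.le hup

theorem stmt_10_general {X : Type*} [MetricSpace X]
    (k : ℕ → ℕ) (hk : StrictMono k) (hk0 : k 0 = 0)
    (β p : ℝ) (hβ0 : 0 < β)
    (hbd : ∃ M : ℝ, ∀ᶠ r in atTop, ((k (r + 1) : ℕ) : ℝ) / ((k r : ℕ) : ℝ) ^ β ≤ M)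
    (x : ℕ → X) (x₀ : X)
    (hx : Tendsto (fun r =>
      (1 / ((k (r + 1) - k r : ℕ) : ℝ)) *
        ∑ i ∈ Finset.Ioc (k r) (k (r + 1)), dist (x i) x₀ ^ p)
      atTop (nhds 0)) :
    Tendsto (fun t : ℕ =>
      (1 / (t : ℝ) ^ β) * ∑ i ∈ Finset.Icc 1 t, dist (x i) x₀ ^ p)
      atTop (nhds 0) := by
  obtain ⟨M, hM⟩ := hbd
  set a : ℕ → ℝ := fun i ↦ dist (x i) x₀ ^ p
  have hblocks : (fun r ↦ ∑ i ∈ Ioc (k r) (k (r + 1)), a i) =o[atTop]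
      fun r ↦ ((k (r + 1) - k r : ℕ) : ℝ) := by
    refine (isLittleO_iff_tendsto fun r hr ↦ ?_).mpr (by simpa only [one_div_mul_eq_div] using hx)
    exact absurd hr (Nat.cast_ne_zero.mpr (Nat.sub_ne_zero_of_lt (hk r.lt_succ_self)))
  have hsums := (isLittleO_sum_Icc_of_isLittleO_blocks hk hk0 hblocks).comp_tendsto
    (tendsto_add_atTop_nat 1)
  have hlacunary : (fun r ↦ (k (r + 1) : ℝ)) =O[atTop] fun r ↦ (k r : ℝ) ^ β := by
    refine IsBigO.of_bound M ?_
    filter_upwards [hM, eventually_ge_atTop 1] with r hr hr1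
    have hpos : (0 : ℝ) < (k r : ℝ) ^ β :=
      Real.rpow_pos_of_pos (Nat.cast_pos.mpr ((Nat.zero_le _).trans_lt (hk hr1))) β
    rw [Real.norm_natCast, Real.norm_of_nonneg hpos.le, ← div_le_iff₀ hpos]
    exact hr
  simpa only [one_div_mul_eq_div] using tendsto_sum_Icc_div_rpow_of_blocks
    (fun i ↦ by positivity) hk hβ0.le (hsums.trans_isBigO hlacunary).tendsto_div_nhds_zero

/-- If limsup_r k_{r+1}/k_r^β < ∞ (expressed as eventual boundedness) and
(x_k) is strongly N_θ(p)-summable (order 1) to x₀, then (x_k) is strongly p-Cesàro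
summable of order β to x₀. -/
theorem stmt_10 {X : Type*} [MetricSpace X]
    (k : ℕ → ℕ) (hk : StrictMono k) (hk0 : k 0 = 0)
    (hh : Tendsto (fun r => ((k (r + 1) - k r : ℕ) : ℝ)) atTop atTop)
    (β p : ℝ) (hβ0 : 0 < β) (hβ1 : β ≤ 1) (hp : 0 < p)
    (hbd : ∃ M : ℝ, ∀ᶠ r in atTop, ((k (r + 1) : ℕ) : ℝ) / ((k r : ℕ) : ℝ) ^ β ≤ M)
    (x : ℕ → X) (x₀ : X)
    (hx : Tendsto (fun r =>
      (1 / ((k (r + 1) - k r : ℕ) : ℝ)) *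
        ∑ i ∈ Finset.Ioc (k r) (k (r + 1)), dist (x i) x₀ ^ p)
      atTop (nhds 0)) :
    Tendsto (fun t : ℕ =>
      (1 / (t : ℝ) ^ β) * ∑ i ∈ Finset.Icc 1 t, dist (x i) x₀ ^ p)
      atTop (nhds 0) :=
  stmt_10_general k hk hk0 β p hβ0 hbd x x₀ hx
end

section
/- Let (X, d) be a metric space, θ a lacunary sequence with limsup_r k_r/k_{r−1}^β < ∞, and β ∈ (0,1]. If (x_k) is strongly 1-Cesàro summable of order β to x′ (i.e., (1/t^β) Σ_{k≤t} d(x_k, x′) → 0) and strongly N_θ(1)-summable to x″ (i.e., (1/h_r) Σ_{k ∈ I_r} d(x_k, x″) → 0), then x′ = x″. -/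
/-!
Cutting `Icc 1 k_n` into the blocks `I_r = Ioc k_r k_(r+1)`, the vanishing block averages of
`d(x_i, x″)` give `∑_{i ≤ k_n} d(x_i, x″) = o(k_n)` by the weighted Cesàro lemma, and the bound
on `k_(r+1) / k_r ^ β` upgrades this to `o(k_(r+1) ^ β)`. Summing the triangle inequality
`d(x′, x″) ≤ d(x_i, x′) + d(x_i, x″)` over `i ≤ t` and using `t ^ β ≤ t` bounds `d(x′, x″)` by the
sum of the two Cesàro means of order `β` at `t`; along `t = k_(r+1)` both tend to `0`.
-/

open Filter Finset Asymptotics Topology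

theorem Finset.sum_range_sum_Ioc {M : Type*} [AddCommMonoid M] {k : ℕ → ℕ} (hk : Monotone k)
    (f : ℕ → M) (n : ℕ) :
    ∑ s ∈ range n, ∑ i ∈ Ioc (k s) (k (s + 1)), f i = ∑ i ∈ Ioc (k 0) (k n), f i := by
  induction n with
  | zero => simp
  | succ n ih =>
    rw [sum_range_succ, ih, sum_Ioc_consecutive _ (hk n.zero_le) (hk n.le_succ)]

theorem isLittleO_sum_Icc_of_tendsto_blockAverage {k : ℕ → ℕ} (hk : StrictMono k) (hk0 : k 0 = 0)
    {u : ℕ → ℝ} (hu : Tendsto (fun r => (1 / ((k (r + 1) - k r : ℕ) : ℝ)) *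
      ∑ i ∈ Ioc (k r) (k (r + 1)), u i) atTop (𝓝 0)) :
    (fun n => ∑ i ∈ Icc 1 (k n), u i) =o[atTop] fun n => (k n : ℝ) := by
  have hblock : (fun r => ∑ i ∈ Ioc (k r) (k (r + 1)), u i) =o[atTop]
      fun r => ((k (r + 1) - k r : ℕ) : ℝ) := by
    refine (isLittleO_iff_tendsto fun r hr => ?_).mpr ?_
    · simp [Nat.sub_eq_zero_iff_le, (hk r.lt_succ_self).not_ge] at hr
    · simpa only [one_div_mul_eq_div] using hu
  have hlength (n : ℕ) : ∑ r ∈ range n, ((k (r + 1) - k r : ℕ) : ℝ) = k n := by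
    rw [← Nat.cast_sum, sum_range_tsub hk.monotone, hk0, Nat.sub_zero]
  have := hblock.sum_range (fun r => Nat.cast_nonneg _) (by
    simp only [hlength]
    exact tendsto_natCast_atTop_atTop.comp hk.tendsto_atTop)
  have hIcc (n : ℕ) : Icc 1 n = Ioc 0 n := Icc_add_one_left_eq_Ioc 0 n
  simp only [hIcc]
  simpa only [sum_range_sum_Ioc hk.monotone, hk0, hlength] using this

theorem isBigO_rpow_of_eventually_div_rpow_le {k : ℕ → ℕ} (hk : StrictMono k) {β : ℝ} (hβ : 0 ≤ β)
    (hbd : ∃ M : ℝ, ∀ᶠ r in atTop, (k (r + 1) : ℝ) / (k r : ℝ) ^ β ≤ M) :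
    (fun r => (k (r + 1) : ℝ)) =O[atTop] fun r => (k (r + 1) : ℝ) ^ β := by
  obtain ⟨M, hM⟩ := hbd
  refine IsBigO.of_bound M ?_
  filter_upwards [hM, eventually_ge_atTop 1] with r hr hr1
  have hkr : (0 : ℝ) < k r := by
    have : r ≤ k r := hk.le_apply
    exact_mod_cast (by omega : 0 < k r)
  have hM0 : 0 ≤ M := (div_nonneg (Nat.cast_nonneg _) (by positivity)).trans hr
  rw [Real.norm_of_nonneg (Nat.cast_nonneg _), Real.norm_of_nonneg (by positivity)]
  calc (k (r + 1) : ℝ) ≤ M * (k r : ℝ) ^ β := (div_le_iff₀ (by positivity)).mp hr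
    _ ≤ M * (k (r + 1) : ℝ) ^ β := by
      gcongr
      exact hk.monotone r.le_succ

theorem tendsto_cesaro_rpow_of_tendsto_blockAverage {k : ℕ → ℕ} (hk : StrictMono k)
    (hk0 : k 0 = 0) {β : ℝ} (hβ : 0 ≤ β)
    (hbd : ∃ M : ℝ, ∀ᶠ r in atTop, (k (r + 1) : ℝ) / (k r : ℝ) ^ β ≤ M)
    {u : ℕ → ℝ} (hu : Tendsto (fun r => (1 / ((k (r + 1) - k r : ℕ) : ℝ)) *
      ∑ i ∈ Ioc (k r) (k (r + 1)), u i) atTop (𝓝 0)) :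
    Tendsto (fun r => 1 / (k (r + 1) : ℝ) ^ β * ∑ i ∈ Icc 1 (k (r + 1)), u i) atTop (𝓝 0) := by
  have := ((isLittleO_sum_Icc_of_tendsto_blockAverage hk hk0 hu).comp_tendsto
    (tendsto_add_atTop_nat 1)).trans_isBigO (isBigO_rpow_of_eventually_div_rpow_le hk hβ hbd)
  simpa only [one_div_mul_eq_div, Function.comp_apply] using this.tendsto_div_nhds_zero

theorem dist_le_cesaro_add_cesaro {X : Type*} [PseudoMetricSpace X] (x : ℕ → X) (a b : X)
    {β : ℝ} (hβ : β ≤ 1) {t : ℕ} (ht : 1 ≤ t) :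
    dist a b ≤ 1 / (t : ℝ) ^ β * ∑ i ∈ Icc 1 t, dist (x i) a +
      1 / (t : ℝ) ^ β * ∑ i ∈ Icc 1 t, dist (x i) b := by
  have ht' : (1 : ℝ) ≤ t := by exact_mod_cast ht
  have htβ : 0 < (t : ℝ) ^ β := by positivity
  rw [← mul_add, ← sum_add_distrib, one_div_mul_eq_div, le_div_iff₀ htβ]
  calc dist a b * (t : ℝ) ^ β ≤ dist a b * t := by
        gcongr
        simpa using Real.rpow_le_rpow_of_exponent_le ht' hβ
    _ = #(Icc 1 t) • dist a b := by simp [mul_comm]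
    _ ≤ ∑ i ∈ Icc 1 t, (dist (x i) a + dist (x i) b) :=
        card_nsmul_le_sum _ _ _ fun i _ => dist_triangle_left a b (x i)

theorem stmt_11_general {X : Type*} [MetricSpace X]
    (k : ℕ → ℕ) (hk : StrictMono k) (hk0 : k 0 = 0)
    (β : ℝ) (hβ0 : 0 < β) (hβ1 : β ≤ 1)
    (hbd : ∃ M : ℝ, ∀ᶠ r in atTop, ((k (r + 1) : ℕ) : ℝ) / ((k r : ℕ) : ℝ) ^ β ≤ M)
    (x : ℕ → X) (x' x'' : X)
    (hx' : Tendsto (fun t : ℕ =>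
      (1 / (t : ℝ) ^ β) * ∑ i ∈ Finset.Icc 1 t, dist (x i) x') atTop (nhds 0))
    (hx'' : Tendsto (fun r =>
      (1 / ((k (r + 1) - k r : ℕ) : ℝ)) *
        ∑ i ∈ Finset.Ioc (k r) (k (r + 1)), dist (x i) x'')
      atTop (nhds 0)) :
    x' = x'' := by
  have hkT : Tendsto (fun r => k (r + 1)) atTop atTop :=
    hk.tendsto_atTop.comp (tendsto_add_atTop_nat 1)
  have hsum := (hx'.comp hkT).add
    (tendsto_cesaro_rpow_of_tendsto_blockAverage hk hk0 hβ0.le hbd hx'')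
  have hle : ∀ᶠ r in atTop, dist x' x'' ≤ _ := (hkT.eventually_ge_atTop 1).mono
    fun r hr => dist_le_cesaro_add_cesaro x x' x'' hβ1 hr
  rw [zero_add] at hsum
  exact dist_le_zero.mp (ge_of_tendsto hsum hle)

/-- If limsup k_{r+1}/k_r^β < ∞ and (x_k) is strongly 1-Cesàro summable
of order β to x′ and strongly N_θ(1)-summable to x″, then x′ = x″. -/
theorem stmt_11 {X : Type*} [MetricSpace X]
    (k : ℕ → ℕ) (hk : StrictMono k) (hk0 : k 0 = 0)
    (hh : Tendsto (fun r => ((k (r + 1) - k r : ℕ) : ℝ)) atTop atTop)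
    (β : ℝ) (hβ0 : 0 < β) (hβ1 : β ≤ 1)
    (hbd : ∃ M : ℝ, ∀ᶠ r in atTop, ((k (r + 1) : ℕ) : ℝ) / ((k r : ℕ) : ℝ) ^ β ≤ M)
    (x : ℕ → X) (x' x'' : X)
    (hx' : Tendsto (fun t : ℕ =>
      (1 / (t : ℝ) ^ β) * ∑ i ∈ Finset.Icc 1 t, dist (x i) x') atTop (nhds 0))
    (hx'' : Tendsto (fun r =>
      (1 / ((k (r + 1) - k r : ℕ) : ℝ)) *
        ∑ i ∈ Finset.Ioc (k r) (k (r + 1)), dist (x i) x'')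
      atTop (nhds 0)) :
    x' = x'' :=
  stmt_11_general k hk hk0 β hβ0 hβ1 hbd x x' x'' hx' hx''
end

section
/- Let (X, d) be a metric space, θ a lacunary sequence, β, γ ∈ (0,1] with β ≤ γ, f a modulus function, and (p_k) a bounded sequence of positive reals with 0 < h = inf_k p_k ≤ p_k ≤ sup_k p_k = H < ∞. If (x_k) satisfies lim_{r→∞} (1/h_r^β) Σ_{k ∈ I_r} [f(d(x_k, x₀))]^{p_k} = 0, then (x_k) is lacunary statistically convergent of order γ to x₀. -/
open Filter Finset

/-- For β ≤ γ in (0,1], a modulus function f and a bounded positive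
sequence (p_k) with 0 < h ≤ p_k ≤ H, if (1/h_r^β) Σ_{k ∈ I_r} [f(d(x_k,x₀))]^{p_k} → 0
then (x_k) is lacunary statistically convergent of order γ to x₀. -/
theorem stmt_13 {X : Type*} [MetricSpace X]
    (k : ℕ → ℕ) (hk : StrictMono k) (hk0 : k 0 = 0)
    (hh : Tendsto (fun r => ((k (r + 1) - k r : ℕ) : ℝ)) atTop atTop)
    (β γ : ℝ) (hβ0 : 0 < β) (hβγ : β ≤ γ) (hγ1 : γ ≤ 1)
    (f : ℝ → ℝ)
    (hfnn : ∀ x ≥ 0, 0 ≤ f x)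
    (hf0 : ∀ x ≥ 0, (f x = 0 ↔ x = 0))
    (hfsub : ∀ x ≥ 0, ∀ y ≥ 0, f (x + y) ≤ f x + f y)
    (hfmono : MonotoneOn f (Set.Ici 0))
    (hfrc : ContinuousWithinAt f (Set.Ici 0) 0)
    (p : ℕ → ℝ) (h H : ℝ) (hh0 : 0 < h)
    (hph : ∀ i, h ≤ p i) (hpH : ∀ i, p i ≤ H)
    (x : ℕ → X) (x₀ : X)
    (hx : Tendsto (fun r =>
      (1 / ((k (r + 1) - k r : ℕ) : ℝ) ^ β) *
        ∑ i ∈ Finset.Ioc (k r) (k (r + 1)), f (dist (x i) x₀) ^ p i)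
      atTop (nhds 0)) :
    ∀ ε > 0, Tendsto (fun r =>
      (1 / ((k (r + 1) - k r : ℕ) : ℝ) ^ γ) *
        (((Finset.Ioc (k r) (k (r + 1))).filter (fun i => ε ≤ dist (x i) x₀)).card : ℝ))
      atTop (nhds 0) := by
  intro ε hε
  have hfε : 0 < f ε := by
    rcases (hfnn ε hε.le).lt_or_eq with h' | h'
    · exact h'
    · exact absurd ((hf0 ε hε.le).mp h'.symm) hε.ne'
  set c : ℝ := min (f ε ^ h) (f ε ^ H) with hc
  have hc0 : 0 < c := lt_min (Real.rpow_pos_of_pos hfε h) (Real.rpow_pos_of_pos hfε H)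
  -- per-term bound
  have hterm : ∀ i, ε ≤ dist (x i) x₀ → c ≤ f (dist (x i) x₀) ^ p i := by
    intro i hi
    have hdnn : (0:ℝ) ≤ dist (x i) x₀ := dist_nonneg
    have hfεd : f ε ≤ f (dist (x i) x₀) := hfmono hε.le hdnn hi
    have hstep : c ≤ f ε ^ p i := by
      rcases le_total (f ε) 1 with h1 | h1
      · exact le_trans (min_le_right _ _)
          (Real.rpow_le_rpow_of_exponent_ge hfε h1 (hpH i))
      · exact le_trans (min_le_left _ _)
          (Real.rpow_le_rpow_of_exponent_le h1 (hph i))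
    exact hstep.trans (Real.rpow_le_rpow hfε.le hfεd (le_trans hh0.le (hph i)))
  have hn1 : ∀ r, (1:ℝ) ≤ ((k (r + 1) - k r : ℕ) : ℝ) := by
    intro r
    have : k r < k (r + 1) := hk (Nat.lt_succ_self r)
    have : 1 ≤ k (r + 1) - k r := by omega
    exact_mod_cast this
  have hupper : ∀ r,
      (1 / ((k (r + 1) - k r : ℕ) : ℝ) ^ γ) *
        (((Finset.Ioc (k r) (k (r + 1))).filter (fun i => ε ≤ dist (x i) x₀)).card : ℝ)
      ≤ (1 / c) * ((1 / ((k (r + 1) - k r : ℕ) : ℝ) ^ β) *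
        ∑ i ∈ Finset.Ioc (k r) (k (r + 1)), f (dist (x i) x₀) ^ p i) := by
    intro r
    set n : ℝ := ((k (r + 1) - k r : ℕ) : ℝ) with hn
    have hn0 : (0:ℝ) < n := lt_of_lt_of_le one_pos (hn1 r)
    have hnγ : (0:ℝ) < n ^ γ := Real.rpow_pos_of_pos hn0 γ
    have hnβ : (0:ℝ) < n ^ β := Real.rpow_pos_of_pos hn0 β
    have hβγ' : n ^ β ≤ n ^ γ := Real.rpow_le_rpow_of_exponent_le (hn1 r) hβγ
    set S := ∑ i ∈ Finset.Ioc (k r) (k (r + 1)), f (dist (x i) x₀) ^ p i with hS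
    set m : ℝ := (((Finset.Ioc (k r) (k (r + 1))).filter (fun i => ε ≤ dist (x i) x₀)).card : ℝ)
    have hcard : m * c ≤ S := by
      have := Finset.sum_le_sum_of_subset_of_nonneg
        (Finset.filter_subset (fun i => ε ≤ dist (x i) x₀) (Finset.Ioc (k r) (k (r + 1))))
        (fun i _ _ => Real.rpow_nonneg (hfnn (dist (x i) x₀) dist_nonneg) (p i))
      calc m * c = ∑ i ∈ (Finset.Ioc (k r) (k (r + 1))).filter (fun i => ε ≤ dist (x i) x₀), c := by
            rw [Finset.sum_const, nsmul_eq_mul]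
        _ ≤ ∑ i ∈ (Finset.Ioc (k r) (k (r + 1))).filter (fun i => ε ≤ dist (x i) x₀),
              f (dist (x i) x₀) ^ p i :=
            Finset.sum_le_sum (fun i hi => hterm i (Finset.mem_filter.mp hi).2)
        _ ≤ S := this
    have hmn : m / n ^ γ ≤ m / n ^ β :=
      div_le_div_of_nonneg_left (Nat.cast_nonneg _) hnβ hβγ'
    have : m / n ^ β ≤ S / (c * n ^ β) := by
      rw [div_le_div_iff₀ hnβ (mul_pos hc0 hnβ)]
      calc m * (c * n ^ β) = (m * c) * n ^ β := by ring
        _ ≤ S * n ^ β := mul_le_mul_of_nonneg_right hcard hnβ.le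
    calc 1 / n ^ γ * m = m / n ^ γ := by ring
      _ ≤ m / n ^ β := hmn
      _ ≤ S / (c * n ^ β) := this
      _ = (1 / c) * ((1 / n ^ β) * S) := by field_simp
  have hlow : ∀ r, (0:ℝ) ≤
      (1 / ((k (r + 1) - k r : ℕ) : ℝ) ^ γ) *
        (((Finset.Ioc (k r) (k (r + 1))).filter (fun i => ε ≤ dist (x i) x₀)).card : ℝ) := by
    intro r
    have hn0 : (0:ℝ) < ((k (r + 1) - k r : ℕ) : ℝ) := lt_of_lt_of_le one_pos (hn1 r)
    exact mul_nonneg (by positivity) (Nat.cast_nonneg _)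
  have hx' : Tendsto (fun r => (1 / c) * ((1 / ((k (r + 1) - k r : ℕ) : ℝ) ^ β) *
        ∑ i ∈ Finset.Ioc (k r) (k (r + 1)), f (dist (x i) x₀) ^ p i)) atTop (nhds 0) := by
    have := hx.const_mul (1 / c)
    simpa using this
  exact squeeze_zero hlow hupper hx'
end

section
/- Let (X, d) be a metric space, θ a lacunary sequence, β ∈ (0,1], f a bounded modulus function, and (p_k) a bounded sequence of positive reals with 0 < h ≤ p_k ≤ H < ∞. If lim_{r→∞} h_r / h_r^β = 1 and (x_k) is lacunary statistically convergent of order β to x₀, then for every ε > 0, limsup_{r→∞} (1/h_r^β) Σ_{k ∈ I_r} [f(d(x_k, x₀))]^{p_k} ≤ max(f(ε)^h, f(ε)^H); in particular (x_k) ∈ w_p^β(θ, f): lim_{r→∞} (1/h_r^β) Σ_{k ∈ I_r} [f(d(x_k, x₀))]^{p_k} = 0. -/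
open Filter Finset

/-- For a bounded modulus function f, a bounded positive sequence (p_k)
with 0 < h ≤ p_k ≤ H, if h_r/h_r^β → 1 and (x_k) is lacunary statistically convergent
of order β to x₀, then for every ε > 0 the limsup of the f-p averages is at most
max(f(ε)^h, f(ε)^H), and in particular the averages tend to 0. -/
theorem stmt_14 {X : Type*} [MetricSpace X]
    (k : ℕ → ℕ) (hk : StrictMono k) (hk0 : k 0 = 0)
    (hh : Tendsto (fun r => ((k (r + 1) - k r : ℕ) : ℝ)) atTop atTop)
    (β : ℝ) (hβ0 : 0 < β) (hβ1 : β ≤ 1)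
    (f : ℝ → ℝ)
    (hfnn : ∀ x ≥ 0, 0 ≤ f x)
    (hf0 : ∀ x ≥ 0, (f x = 0 ↔ x = 0))
    (hfsub : ∀ x ≥ 0, ∀ y ≥ 0, f (x + y) ≤ f x + f y)
    (hfmono : MonotoneOn f (Set.Ici 0))
    (hfrc : ContinuousWithinAt f (Set.Ici 0) 0)
    (hfbd : ∃ K : ℝ, ∀ x ≥ (0 : ℝ), f x ≤ K)
    (p : ℕ → ℝ) (h H : ℝ) (hh0 : 0 < h)
    (hph : ∀ i, h ≤ p i) (hpH : ∀ i, p i ≤ H)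
    (hratio : Tendsto (fun r =>
      ((k (r + 1) - k r : ℕ) : ℝ) / ((k (r + 1) - k r : ℕ) : ℝ) ^ β) atTop (nhds 1))
    (x : ℕ → X) (x₀ : X)
    (hx : ∀ ε > 0, Tendsto (fun r =>
      (1 / ((k (r + 1) - k r : ℕ) : ℝ) ^ β) *
        (((Finset.Ioc (k r) (k (r + 1))).filter (fun i => ε ≤ dist (x i) x₀)).card : ℝ))
      atTop (nhds 0)) :
    (∀ ε > 0, Filter.limsup (fun r =>
      (1 / ((k (r + 1) - k r : ℕ) : ℝ) ^ β) *
        ∑ i ∈ Finset.Ioc (k r) (k (r + 1)), f (dist (x i) x₀) ^ p i) atTop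
      ≤ max (f ε ^ h) (f ε ^ H)) ∧
    Tendsto (fun r =>
      (1 / ((k (r + 1) - k r : ℕ) : ℝ) ^ β) *
        ∑ i ∈ Finset.Ioc (k r) (k (r + 1)), f (dist (x i) x₀) ^ p i)
      atTop (nhds 0) := by
  obtain ⟨K, hK⟩ := hfbd
  have hH0 : 0 < H := lt_of_lt_of_le hh0 (le_trans (hph 0) (hpH 0))
  set S : ℕ → ℝ := fun r =>
    (1 / ((k (r + 1) - k r : ℕ) : ℝ) ^ β) *
      ∑ i ∈ Finset.Ioc (k r) (k (r + 1)), f (dist (x i) x₀) ^ p i with hS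
  set a : ℝ → ℕ → ℝ := fun ε r =>
    (1 / ((k (r + 1) - k r : ℕ) : ℝ) ^ β) *
      (((Finset.Ioc (k r) (k (r + 1))).filter (fun i => ε ≤ dist (x i) x₀)).card : ℝ) with ha
  set b : ℕ → ℝ := fun r =>
    ((k (r + 1) - k r : ℕ) : ℝ) / ((k (r + 1) - k r : ℕ) : ℝ) ^ β with hb
  set C : ℝ := max K 1 ^ H with hC
  set M : ℝ → ℝ := fun ε => max (f ε ^ h) (f ε ^ H) with hM
  have hC0 : 0 ≤ C := Real.rpow_nonneg (le_trans zero_le_one (le_max_right _ _)) _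
  -- basic facts about h_r
  have hr1 : ∀ r, (1 : ℝ) ≤ ((k (r + 1) - k r : ℕ) : ℝ) := by
    intro r
    have h2 : k r < k (r + 1) := hk (by omega)
    exact_mod_cast Nat.one_le_iff_ne_zero.mpr (by omega)
  have hrβ : ∀ r, (0 : ℝ) < ((k (r + 1) - k r : ℕ) : ℝ) ^ β := fun r =>
    Real.rpow_pos_of_pos (lt_of_lt_of_le one_pos (hr1 r)) β
  -- nonnegativity of terms and of M, S
  have hterm : ∀ i, 0 ≤ f (dist (x i) x₀) := fun i => hfnn _ dist_nonneg
  have hS0 : ∀ r, 0 ≤ S r := by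
    intro r
    apply mul_nonneg (by positivity)
    exact Finset.sum_nonneg fun i _ => Real.rpow_nonneg (hterm i) _
  have hM0 : ∀ ε ≥ (0:ℝ), 0 ≤ M ε := fun ε hε =>
    le_trans (Real.rpow_nonneg (hfnn ε hε) h) (le_max_left _ _)
  -- pointwise bounds on the terms
  have htC : ∀ i, f (dist (x i) x₀) ^ p i ≤ C := by
    intro i
    have h1 : f (dist (x i) x₀) ≤ max K 1 := le_trans (hK _ dist_nonneg) (le_max_left _ _)
    calc f (dist (x i) x₀) ^ p i ≤ max K 1 ^ p i :=
          Real.rpow_le_rpow (hterm i) h1 (le_of_lt (lt_of_lt_of_le hh0 (hph i)))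
      _ ≤ C := Real.rpow_le_rpow_of_exponent_le (le_max_right _ _) (hpH i)
  have htM : ∀ ε > (0:ℝ), ∀ i, dist (x i) x₀ < ε → f (dist (x i) x₀) ^ p i ≤ M ε := by
    intro ε hε i hi
    have hfd : f (dist (x i) x₀) ≤ f ε :=
      hfmono dist_nonneg (le_of_lt hε) (le_of_lt hi)
    have h1 : f (dist (x i) x₀) ^ p i ≤ f ε ^ p i :=
      Real.rpow_le_rpow (hterm i) hfd (le_of_lt (lt_of_lt_of_le hh0 (hph i)))
    refine h1.trans ?_
    rcases le_or_gt (f ε) 1 with hfe | hfe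
    · rcases eq_or_lt_of_le (hfnn ε (le_of_lt hε)) with h0 | h0
      · rw [← h0, Real.zero_rpow (ne_of_gt (lt_of_lt_of_le hh0 (hph i)))]
        exact hM0 ε (le_of_lt hε)
      · exact le_trans (Real.rpow_le_rpow_of_exponent_ge h0 hfe (hph i)) (le_max_left _ _)
    · exact le_trans (Real.rpow_le_rpow_of_exponent_le (le_of_lt hfe) (hpH i)) (le_max_right _ _)
  -- the key bound : S r ≤ C * a ε r + M ε * b r
  have key : ∀ ε > (0:ℝ), ∀ r, S r ≤ C * a ε r + M ε * b r := by
    intro ε hε r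
    set I := Finset.Ioc (k r) (k (r + 1)) with hI
    have hsplit : ∑ i ∈ I, f (dist (x i) x₀) ^ p i =
        (∑ i ∈ I.filter (fun i => ε ≤ dist (x i) x₀), f (dist (x i) x₀) ^ p i) +
        (∑ i ∈ I.filter (fun i => ¬ ε ≤ dist (x i) x₀), f (dist (x i) x₀) ^ p i) :=
      (Finset.sum_filter_add_sum_filter_not I _ _).symm
    have h1 : (∑ i ∈ I.filter (fun i => ε ≤ dist (x i) x₀), f (dist (x i) x₀) ^ p i) ≤
        C * ((I.filter (fun i => ε ≤ dist (x i) x₀)).card : ℝ) := by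
      rw [mul_comm]
      exact le_trans (Finset.sum_le_card_nsmul _ _ C fun i _ => htC i) (by
        rw [nsmul_eq_mul])
    have h2 : (∑ i ∈ I.filter (fun i => ¬ ε ≤ dist (x i) x₀), f (dist (x i) x₀) ^ p i) ≤
        M ε * ((k (r + 1) - k r : ℕ) : ℝ) := by
      have hcard : ((I.filter (fun i => ¬ ε ≤ dist (x i) x₀)).card : ℝ) ≤
          ((k (r + 1) - k r : ℕ) : ℝ) := by
        have := Finset.card_filter_le I (fun i => ¬ ε ≤ dist (x i) x₀)
        have hIcard : I.card = k (r + 1) - k r := Nat.card_Ioc _ _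
        exact_mod_cast hIcard ▸ this
      calc (∑ i ∈ I.filter (fun i => ¬ ε ≤ dist (x i) x₀), f (dist (x i) x₀) ^ p i)
          ≤ ((I.filter (fun i => ¬ ε ≤ dist (x i) x₀)).card : ℝ) * M ε := by
            refine le_trans (Finset.sum_le_card_nsmul _ _ (M ε) fun i hi => ?_) (by rw [nsmul_eq_mul])
            exact htM ε hε i (lt_of_not_ge (Finset.mem_filter.mp hi).2)
        _ ≤ M ε * ((k (r + 1) - k r : ℕ) : ℝ) := by
            rw [mul_comm]; exact mul_le_mul_of_nonneg_left hcard (hM0 ε (le_of_lt hε))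
    have hinv : (0:ℝ) ≤ 1 / ((k (r + 1) - k r : ℕ) : ℝ) ^ β := by positivity
    calc S r ≤ (1 / ((k (r + 1) - k r : ℕ) : ℝ) ^ β) *
          (C * ((I.filter (fun i => ε ≤ dist (x i) x₀)).card : ℝ) +
           M ε * ((k (r + 1) - k r : ℕ) : ℝ)) := by
          refine mul_le_mul_of_nonneg_left ?_ hinv
          rw [hS] at *
          simpa [hI] using hsplit ▸ add_le_add h1 h2
      _ = C * a ε r + M ε * b r := by
          simp only [ha, hb]
          ring
  -- the comparison sequence tends to M ε
  have hT : ∀ ε > (0:ℝ), Tendsto (fun r => C * a ε r + M ε * b r) atTop (nhds (M ε)) := by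
    intro ε hε
    have h1 := ((hx ε hε).const_mul C).add (hratio.const_mul (M ε))
    have h0 : C * 0 + M ε * 1 = M ε := by ring
    rw [h0] at h1; exact h1
  -- Part 1 : limsup bound
  have part1 : ∀ ε > (0:ℝ), Filter.limsup S atTop ≤ M ε := by
    intro ε hε
    have h1 : Filter.limsup S atTop ≤ Filter.limsup (fun r => C * a ε r + M ε * b r) atTop := by
      refine Filter.limsup_le_limsup (Eventually.of_forall (key ε hε)) ?_ ?_
      · exact Filter.isCoboundedUnder_le_of_le atTop hS0
      · exact (hT ε hε).isBoundedUnder_le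
    exact h1.trans (le_of_eq (hT ε hε).limsup_eq)
  -- choose ε small making M ε small
  have hsmall : ∀ δ > (0:ℝ), ∃ ε > (0:ℝ), M ε ≤ δ := by
    intro δ hδ
    have hf00 : f 0 = 0 := (hf0 0 le_rfl).mpr rfl
    set c : ℝ := min 1 (δ ^ h⁻¹) with hc
    have hc0 : 0 < c := lt_min one_pos (Real.rpow_pos_of_pos hδ _)
    have := Metric.continuousWithinAt_iff.mp hfrc c hc0
    obtain ⟨d, hd0, hd⟩ := this
    refine ⟨d / 2, by positivity, ?_⟩
    have hmem : d / 2 ∈ Set.Ici (0:ℝ) := Set.mem_Ici.mpr (by positivity)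
    have hdist : dist (d/2) 0 < d := by
      rw [Real.dist_eq, sub_zero, abs_of_pos (by positivity)]; linarith
    have hfd := hd hmem hdist
    rw [Real.dist_eq, hf00, sub_zero, abs_of_nonneg (hfnn _ (by positivity))] at hfd
    have hfle : f (d/2) ≤ c := le_of_lt hfd
    have hfle1 : f (d/2) ≤ 1 := hfle.trans (min_le_left _ _)
    have hfnn' : 0 ≤ f (d/2) := hfnn _ (by positivity)
    have hch : c ^ h ≤ δ := by
      calc c ^ h ≤ (δ ^ h⁻¹) ^ h :=
            Real.rpow_le_rpow (le_of_lt hc0) (min_le_right _ _) (le_of_lt hh0)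
        _ = δ := by
            rw [← Real.rpow_mul (le_of_lt hδ), inv_mul_cancel₀ (ne_of_gt hh0), Real.rpow_one]
    have hfh : f (d/2) ^ h ≤ δ :=
      le_trans (Real.rpow_le_rpow hfnn' hfle (le_of_lt hh0)) hch
    have hfH : f (d/2) ^ H ≤ δ := by
      rcases eq_or_lt_of_le hfnn' with h0 | h0
      · rw [← h0, Real.zero_rpow (ne_of_gt hH0)]; exact le_of_lt hδ
      · exact le_trans (le_trans (Real.rpow_le_rpow_of_exponent_ge h0 hfle1
          (le_trans (hph 0) (hpH 0))) le_rfl) hfh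
    exact max_le hfh hfH
  -- Part 2 : tendsto 0
  have part2 : Tendsto S atTop (nhds 0) := by
    have hlimsup : Filter.limsup S atTop ≤ 0 := by
      refine le_of_forall_pos_le_add fun δ hδ => ?_
      obtain ⟨ε, hε, hMδ⟩ := hsmall δ hδ
      simpa using (part1 ε hε).trans hMδ
    have hbddabove : Filter.IsBoundedUnder (· ≤ ·) atTop S :=
      ((hT 1 one_pos).isBoundedUnder_le).mono_le (Eventually.of_forall (key 1 one_pos))
    have hbddbelow : Filter.IsBoundedUnder (· ≥ ·) atTop S := Filter.isBoundedUnder_of ⟨0, hS0⟩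
    have hliminf : (0:ℝ) ≤ Filter.liminf S atTop :=
      Filter.le_liminf_of_le hbddabove.isCoboundedUnder_ge (Eventually.of_forall hS0)
    exact tendsto_of_le_liminf_of_limsup_le hliminf hlimsup hbddabove hbddbelow
  exact ⟨part1, part2⟩
end

section
/- Let (X, d) be a metric space, θ a lacunary sequence, β ∈ (0,1], f a modulus function, and (p_k) a bounded sequence of positive reals with p_k → s > 0. If (x_k) is w_p^β(θ, f)-summable to both x′ and x″, i.e., lim_{r→∞} (1/h_r^β) Σ_{k ∈ I_r} [f(d(x_k, x′))]^{p_k} = 0 and lim_{r→∞} (1/h_r^β) Σ_{k ∈ I_r} [f(d(x_k, x″))]^{p_k} = 0, then x′ = x″. -/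
open Filter Finset

/-- For a modulus function f and a bounded positive sequence (p_k) with
p_k → s > 0, if (x_k) is w_p^β(θ,f)-summable to both x′ and x″, then x′ = x″. -/
theorem stmt_15 {X : Type*} [MetricSpace X]
    (k : ℕ → ℕ) (hk : StrictMono k) (hk0 : k 0 = 0)
    (hh : Tendsto (fun r => ((k (r + 1) - k r : ℕ) : ℝ)) atTop atTop)
    (β : ℝ) (hβ0 : 0 < β) (hβ1 : β ≤ 1)
    (f : ℝ → ℝ)
    (hfnn : ∀ x ≥ 0, 0 ≤ f x)
    (hf0 : ∀ x ≥ 0, (f x = 0 ↔ x = 0))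
    (hfsub : ∀ x ≥ 0, ∀ y ≥ 0, f (x + y) ≤ f x + f y)
    (hfmono : MonotoneOn f (Set.Ici 0))
    (hfrc : ContinuousWithinAt f (Set.Ici 0) 0)
    (p : ℕ → ℝ) (h H s : ℝ) (hh0 : 0 < h)
    (hph : ∀ i, h ≤ p i) (hpH : ∀ i, p i ≤ H)
    (hps : Tendsto p atTop (nhds s)) (hs : 0 < s)
    (x : ℕ → X) (x' x'' : X)
    (hx' : Tendsto (fun r =>
      (1 / ((k (r + 1) - k r : ℕ) : ℝ) ^ β) *
        ∑ i ∈ Finset.Ioc (k r) (k (r + 1)), f (dist (x i) x') ^ p i)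
      atTop (nhds 0))
    (hx'' : Tendsto (fun r =>
      (1 / ((k (r + 1) - k r : ℕ) : ℝ) ^ β) *
        ∑ i ∈ Finset.Ioc (k r) (k (r + 1)), f (dist (x i) x'') ^ p i)
      atTop (nhds 0)) :
    x' = x'' := by

  by_contra hne
  have hd : 0 < dist x' x'' := dist_pos.2 hne
  set c := f (dist x' x'') with hc
  have hc0 : 0 < c := by
    rcases lt_or_eq_of_le (hfnn _ hd.le) with h1 | h1
    · exact h1
    · exact absurd ((hf0 _ hd.le).1 h1.symm) hd.ne'
  set m := min ((c / 2) ^ h) ((c / 2) ^ H) with hm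
  have hc2 : (0:ℝ) < c / 2 := by linarith
  have hm0 : 0 < m :=
    lt_min (Real.rpow_pos_of_pos hc2 _) (Real.rpow_pos_of_pos hc2 _)
  have key : ∀ i, m ≤ f (dist (x i) x') ^ p i + f (dist (x i) x'') ^ p i := by
    intro i
    set a := dist (x i) x' with ha'
    set b := dist (x i) x'' with hb'
    have ha : 0 ≤ a := dist_nonneg
    have hb : 0 ≤ b := dist_nonneg
    have htri : dist x' x'' ≤ a + b := by
      rw [ha', hb', dist_comm (x i) x']
      exact dist_triangle x' (x i) x''
    have hcab : c ≤ f a + f b := by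
      calc c ≤ f (a + b) := hfmono (Set.mem_Ici.2 hd.le)
              (Set.mem_Ici.2 (by positivity)) htri
        _ ≤ f a + f b := hfsub a ha b hb
    have hstep : ∀ t, c / 2 ≤ t → m ≤ t ^ p i := by
      intro t ht
      have h2 : (c / 2) ^ p i ≤ t ^ p i :=
        Real.rpow_le_rpow hc2.le ht (le_trans hh0.le (hph i))
      refine le_trans ?_ h2
      rcases le_or_gt (c / 2) 1 with h3 | h3
      · exact le_trans (min_le_right _ _)
          (Real.rpow_le_rpow_of_exponent_ge hc2 h3 (hpH i))
      · exact le_trans (min_le_left _ _)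
          (Real.rpow_le_rpow_of_exponent_le h3.le (hph i))
    have hfa : 0 ≤ f a := hfnn a ha
    have hfb : 0 ≤ f b := hfnn b hb
    rcases le_total (f a) (f b) with h4 | h4
    · have h5 : c / 2 ≤ f b := by linarith
      have := hstep (f b) h5
      have hpa : 0 ≤ f a ^ p i := Real.rpow_nonneg hfa _
      linarith
    · have h5 : c / 2 ≤ f a := by linarith
      have := hstep (f a) h5
      have hpb : 0 ≤ f b ^ p i := Real.rpow_nonneg hfb _
      linarith
  have hev : ∀ r, m ≤
      (1 / ((k (r + 1) - k r : ℕ) : ℝ) ^ β) *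
        ∑ i ∈ Finset.Ioc (k r) (k (r + 1)), f (dist (x i) x') ^ p i +
      (1 / ((k (r + 1) - k r : ℕ) : ℝ) ^ β) *
        ∑ i ∈ Finset.Ioc (k r) (k (r + 1)), f (dist (x i) x'') ^ p i := by
    intro r
    set n : ℝ := ((k (r + 1) - k r : ℕ) : ℝ) with hn
    have hlt : k r < k (r + 1) := hk (Nat.lt_succ_self r)
    have hn1 : (1:ℝ) ≤ n := by
      rw [hn]
      exact_mod_cast Nat.one_le_iff_ne_zero.2 (Nat.sub_ne_zero_of_lt hlt)
    have hn0 : (0:ℝ) < n := lt_of_lt_of_le one_pos hn1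
    have hnb : (0:ℝ) < n ^ β := Real.rpow_pos_of_pos hn0 _
    have hnbn : n ^ β ≤ n := by
      have := Real.rpow_le_rpow_of_exponent_le hn1 hβ1
      rwa [Real.rpow_one] at this
    have hcard : ((Finset.Ioc (k r) (k (r + 1))).card : ℝ) = n := by
      rw [Nat.card_Ioc, hn]
    have hS : n * m ≤
        ∑ i ∈ Finset.Ioc (k r) (k (r + 1)),
          (f (dist (x i) x') ^ p i + f (dist (x i) x'') ^ p i) := by
      calc n * m = ∑ _i ∈ Finset.Ioc (k r) (k (r + 1)), m := by
            rw [Finset.sum_const, nsmul_eq_mul, hcard]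
        _ ≤ _ := Finset.sum_le_sum (fun i _ => key i)
    rw [← mul_add, ← Finset.sum_add_distrib]
    have h6 : m ≤ (1 / n ^ β) * (n * m) := by
      rw [one_div, ← div_eq_inv_mul, le_div_iff₀ hnb]
      nlinarith
    calc m ≤ (1 / n ^ β) * (n * m) := h6
      _ ≤ _ := by
        apply mul_le_mul_of_nonneg_left hS
        positivity
  have hsum : Tendsto (fun r =>
      (1 / ((k (r + 1) - k r : ℕ) : ℝ) ^ β) *
        ∑ i ∈ Finset.Ioc (k r) (k (r + 1)), f (dist (x i) x') ^ p i +
      (1 / ((k (r + 1) - k r : ℕ) : ℝ) ^ β) *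
        ∑ i ∈ Finset.Ioc (k r) (k (r + 1)), f (dist (x i) x'') ^ p i)
      atTop (nhds 0) := by
    simpa using hx'.add hx''
  have : m ≤ 0 := ge_of_tendsto hsum (Filter.Eventually.of_forall hev)
  linarith
end
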